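/- Let Y and Y' be doubly-resonant saddle-nodes in prepared form (with eigenvalue parameters λ, λ' ∈ ℂ\{0} respectively). If some fibered formal diffeomorphism conjugates Y to Y', then res(Y) = res(Y'). -/

import Mathlib

open MvPowerSeries

noncomputable section

/-- `R3` is the ring `ℂ[[x, y₁, y₂]]` of formal power series in three variables, where
variable `0` plays the role of `x`, variable `1` of `y₁` and variable `2` of `y₂`. -/
abbrev R3 : Type := MvPowerSeries (Fin 3) ℂ

/-- Build a formal power series from its coefficient function. -/
def mk3 (g : (Fin 3 →₀ ℕ) → ℂ) : R3 := g

/-- Coefficient of the monomial with exponents `m` in `f`. -/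
def cf (m : Fin 3 →₀ ℕ) (f : R3) : ℂ := MvPowerSeries.coeff m f

/-- The exponent vector of the monomial `x^{k₀} y₁^{k₁} y₂^{k₂}`. -/
def e (k₀ k₁ k₂ : ℕ) : Fin 3 →₀ ℕ :=
  Finsupp.single 0 k₀ + Finsupp.single 1 k₁ + Finsupp.single 2 k₂

/-- Formal partial derivative with respect to the `i`-th variable. -/
def pd (i : Fin 3) (f : R3) : R3 :=
  mk3 fun m => ((m i : ℂ) + 1) * cf (m + Finsupp.single i 1) f

/-- The formal vector field (derivation) `b 0 · ∂/∂x + b 1 · ∂/∂y₁ + b 2 · ∂/∂y₂`. -/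
def VF (b : Fin 3 → R3) (f : R3) : R3 := ∑ i : Fin 3, b i * pd i f

/-- The maximal ideal `𝔪` of `ℂ[[x,y₁,y₂]]` (series with zero constant term). -/
def mI : Ideal R3 := RingHom.ker (MvPowerSeries.constantCoeff (σ := Fin 3) (R := ℂ))

/-- The variables, as power series. -/
def Xv (i : Fin 3) : R3 := MvPowerSeries.X i

/-- Constant power series. -/
def Cc (a : ℂ) : R3 := MvPowerSeries.C (σ := Fin 3) (R := ℂ) a

/-- The matrix of linear coefficients of a triple of power series. -/
def linM (φ : Fin 3 → R3) : Matrix (Fin 3) (Fin 3) ℂ :=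
  Matrix.of fun i j => cf (Finsupp.single j 1) (φ i)

/-- `φ` is a formal diffeomorphism: a triple in `𝔪³` with invertible linear part. -/
def IsDiffeo (φ : Fin 3 → R3) : Prop :=
  (∀ i, (MvPowerSeries.constantCoeff (σ := Fin 3) (R := ℂ)) (φ i) = 0) ∧ IsUnit (linM φ).det

/-- `φ` is fibered: its first component is the variable `x`. -/
def IsFibered (φ : Fin 3 → R3) : Prop := φ 0 = Xv 0

/-- Pullback (substitution) action: `pb φ f = f(φ 0, φ 1, φ 2)`, written coefficientwise
(the sum below has only finitely many nonzero terms when each `φ i` has zero constant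
term, which is the case for formal diffeomorphisms). -/
def pb (φ : Fin 3 → R3) (f : R3) : R3 :=
  mk3 fun k => ∑' m : Fin 3 →₀ ℕ, cf m f * cf k (∏ i : Fin 3, φ i ^ (m i))

/-- `Φ` conjugates `Y` to `Z` (that is, `Z = Φ_*(Y)`): `Φ*(Z(f)) = Y(Φ*(f))` for all `f`. -/
def Conj (φ Y Z : Fin 3 → R3) : Prop :=
  ∀ f : R3, pb φ (VF Z f) = VF Y (pb φ f)

/-- The power series `c(y₁ y₂)` obtained from a one-variable series `c` by substituting
`v = y₁ y₂`. -/
def csub (c : PowerSeries ℂ) : R3 :=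
  mk3 fun m => if m 0 = 0 ∧ m 1 = m 2 then PowerSeries.coeff (R := ℂ) (m 1) c else 0

/-- Components of the normal form
`x²∂/∂x + (−λ + a₁x + c₁(y₁y₂))y₁∂/∂y₁ + (λ + a₂x + c₂(y₁y₂))y₂∂/∂y₂`. -/
def NF (l a₁ a₂ : ℂ) (c₁ c₂ : PowerSeries ℂ) : Fin 3 → R3 :=
  ![Xv 0 ^ 2,
    (Cc (-l) + Cc a₁ * Xv 0 + csub c₁) * Xv 1,
    (Cc l + Cc a₂ * Xv 0 + csub c₂) * Xv 2]

/-- Components of a doubly-resonant saddle-node in prepared form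
`x²∂/∂x + (−λy₁ + F₁)∂/∂y₁ + (λy₂ + F₂)∂/∂y₂`. -/
def SN (l : ℂ) (F₁ F₂ : R3) : Fin 3 → R3 :=
  ![Xv 0 ^ 2, Cc (-l) * Xv 1 + F₁, Cc l * Xv 2 + F₂]

/-- The residue of the prepared saddle-node with nonlinear parts `F₁, F₂`: the coefficient
of `x y₁` in `F₁` plus the coefficient of `x y₂` in `F₂`. -/
def resid (F₁ F₂ : R3) : ℂ := cf (e 1 1 0) F₁ + cf (e 1 0 1) F₂

/-- `z` is not a nonpositive rational number. -/
def NotQle0 (z : ℂ) : Prop := ∀ q : ℚ, q ≤ 0 → z ≠ (q : ℂ)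

/-- `φ` is transversally symplectic (with respect to `ω = dy₁∧dy₂/x` and `dx`):
it is fibered and `(∂φ₁/∂y₁)(∂φ₂/∂y₂) − (∂φ₁/∂y₂)(∂φ₂/∂y₁) = 1`. -/
def TransSymp (φ : Fin 3 → R3) : Prop :=
  φ 0 = Xv 0 ∧ pd 1 (φ 1) * pd 2 (φ 2) - pd 2 (φ 1) * pd 1 (φ 2) = 1

/-- `b` depends only on the variable `x`. -/
def OnlyX (b : R3) : Prop := ∀ m : Fin 3 →₀ ℕ, (m 1 ≠ 0 ∨ m 2 ≠ 0) → cf m b = 0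

/-- The vector field with components `b` is transversally Hamiltonian (w.r.t.
`ω = dy₁∧dy₂/x` and `dx`): `b 0 ∈ x·ℂ[[x]]` and `x·(∂b₁/∂y₁ + ∂b₂/∂y₂) = b 0`. -/
def TransHam (b : Fin 3 → R3) : Prop :=
  OnlyX (b 0) ∧ (MvPowerSeries.constantCoeff (σ := Fin 3) (R := ℂ)) (b 0) = 0 ∧
    Xv 0 * (pd 1 (b 1) + pd 2 (b 2)) = b 0


/-!
Write `A(g)` for the matrix of linear coefficients of a triple `g` of series and
`D(g) := A(∂g/∂x)`. Applying the conjugacy to the coordinate functions gives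
`φ*(Y'ⱼ) = Y(φⱼ)`. Taking linear parts yields `A(Y') A(φ) = A(φ) A(Y)` with
`A(Y) = diag(0, -λ, λ)`, `A(Y') = diag(0, -λ', λ')`; as `λ' ≠ 0`, `φ₁` and `φ₂` have no
`x`-term. Differentiating in `x` before taking linear parts (Leibniz rule on the side of `Y`,
a coefficient computation on the side of `φ*`) yields
`A(Y') D(φ) + D(Y') A(φ) = D(φ) A(Y) + A(φ) D(Y)`. After multiplying by `A(φ)⁻¹` the
`D(φ)`-terms cancel in the trace, so `tr D(Y) = tr D(Y')`, and `tr D(Y) = 2 + res(Y)`.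
-/

open Finsupp

theorem pderiv_pderiv_comm {σ R : Type*} [CommSemiring R] (i j : σ) (f : MvPowerSeries σ R) :
    pderiv R i (pderiv R j f) = pderiv R j (pderiv R i f) := by
  by_cases hij : i = j
  · rw [hij]
  ext n
  simp only [coeff_pderiv, add_right_comm n (single i 1), Finsupp.add_apply, single_eq_of_ne hij,
    single_eq_of_ne (Ne.symm hij), add_zero]
  ring

theorem coeff_X_mul_add {σ R : Type*} [CommSemiring R] (i : σ) (n : σ →₀ ℕ)
    (g : MvPowerSeries σ R) : coeff (single i 1 + n) (X i * g) = coeff n g := by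
  rw [X_def, coeff_monomial_mul, if_pos le_self_add, one_mul, add_tsub_cancel_left]

theorem coeff_single_mul {σ R : Type*} [CommRing R] (i : σ) {b : MvPowerSeries σ R}
    (hb : constantCoeff b = 0) (h : MvPowerSeries σ R) :
    coeff (single i 1) (b * h) = coeff (single i 1) b * constantCoeff h := by
  set h₁ := h - C (constantCoeff h)
  have h₁0 : constantCoeff h₁ = 0 := by simp [h₁]
  have hbh₁ : coeff (single i 1) (b * h₁) = 0 := by
    apply coeff_of_lt_order
    calc (((single i 1).degree : ℕ) : ℕ∞) = 1 := by simp
      _ < 1 + 1 := by norm_num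
      _ ≤ b.order + h₁.order := add_le_add (one_le_order_iff_constCoeff_eq_zero.mpr hb)
          (one_le_order_iff_constCoeff_eq_zero.mpr h₁0)
      _ ≤ (b * h₁).order := le_order_mul
  rw [show h = C (constantCoeff h) + h₁ by simp [h₁], mul_add, map_add, hbh₁, coeff_mul_C,
    map_add, h₁0, constantCoeff_C, add_zero, add_zero]

theorem coeff_prod_pow_eq_zero_of_weight_lt {σ R : Type*} [CommSemiring R] [Fintype σ]
    {w : σ → ℕ} {φ : σ → MvPowerSeries σ R} (hφ : ∀ i, (w i : ℕ∞) ≤ (φ i).weightedOrder w)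
    {k m : σ →₀ ℕ} (h : weight w k < weight w m) : coeff k (∏ i, φ i ^ m i) = 0 := by
  apply coeff_eq_zero_of_lt_weightedOrder
  calc ((weight w k : ℕ) : ℕ∞) < weight w m := by exact_mod_cast h
    _ = ∑ i, m i • (w i : ℕ∞) := by rw [weight_eq_sum]; push_cast; rfl
    _ ≤ ∑ i, (φ i ^ m i).weightedOrder w := Finset.sum_le_sum fun i _ =>
          (nsmul_le_nsmul_right (hφ i) _).trans (le_weightedOrder_pow w _)
    _ ≤ (∏ i, φ i ^ m i).weightedOrder w := le_weightedOrder_prod w _ _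

/-- `h` is the `x`-derivative of `hL`, with `C` standing for the derivative of `P`. -/
theorem Matrix.trace_eq_of_mul_add_mul_eq {n R : Type*} [Fintype n] [DecidableEq n] [CommRing R]
    {P L L' C B B' : Matrix n n R} (hP : IsUnit P.det) (hL : L' * P = P * L)
    (h : L' * C + B' * P = C * L + P * B) : B'.trace = B.trace := by
  have hPL : P⁻¹ * L' = L * P⁻¹ := by
    calc P⁻¹ * L' = P⁻¹ * (L' * P) * P⁻¹ := by
          rw [Matrix.mul_assoc P⁻¹, Matrix.mul_assoc L', mul_nonsing_inv _ hP, Matrix.mul_one]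
      _ = L * P⁻¹ := by rw [hL, ← Matrix.mul_assoc, nonsing_inv_mul _ hP, Matrix.one_mul]
  have hB' : B' = (C * L + P * B - L' * C) * P⁻¹ := by
    rw [← h, add_sub_cancel_left, Matrix.mul_assoc, mul_nonsing_inv _ hP, Matrix.mul_one]
  have hPB : (P * B * P⁻¹).trace = B.trace := by
    rw [Matrix.mul_assoc, trace_mul_comm, Matrix.mul_assoc, nonsing_inv_mul _ hP, Matrix.mul_one]
  have hLC : (L' * C * P⁻¹).trace = (C * L * P⁻¹).trace := by
    rw [trace_mul_cycle, hPL, trace_mul_cycle]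
  rw [hB', Matrix.sub_mul, Matrix.add_mul, trace_sub, trace_add, hPB, hLC, add_sub_cancel_left]

@[simp] theorem e_apply_zero (a b c : ℕ) : e a b c 0 = a := by simp [e]

@[simp] theorem e_apply_one (a b c : ℕ) : e a b c 1 = b := by simp [e]

@[simp] theorem e_apply_two (a b c : ℕ) : e a b c 2 = c := by simp [e]

theorem eq_e (m : Fin 3 →₀ ℕ) : m = e (m 0) (m 1) (m 2) := by
  ext i; fin_cases i <;> simp

@[simp] theorem e_inj {a b c a' b' c' : ℕ} :
    e a b c = e a' b' c' ↔ a = a' ∧ b = b' ∧ c = c' := by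
  refine ⟨fun h => ⟨?_, ?_, ?_⟩, by rintro ⟨rfl, rfl, rfl⟩; rfl⟩ <;>
  [have := DFunLike.congr_fun h 0; have := DFunLike.congr_fun h 1;
    have := DFunLike.congr_fun h 2] <;>
  simpa using this

/-- The series of weighted order `≥ 2` form the ideal `⟨x², y₁, y₂⟩`, which contains the
components of a prepared saddle-node and, once `φ₁, φ₂` are known to have no `x`-term, the
components `φ₁, φ₂` of the conjugacy. -/
def xyWeight : Fin 3 → ℕ := ![1, 2, 2]

theorem weight_xyWeight (m : Fin 3 →₀ ℕ) : weight xyWeight m = m 0 + 2 * m 1 + 2 * m 2 := by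
  simp [weight_eq_sum, Fin.sum_univ_three, xyWeight]; ring

theorem two_le_weightedOrder_xyWeight {f : R3} (h0 : constantCoeff f = 0)
    (h1 : coeff (single 0 1) f = 0) : 2 ≤ f.weightedOrder xyWeight := by
  refine le_weightedOrder _ fun d hd => ?_
  have hd' : d 0 + 2 * d 1 + 2 * d 2 < 2 := by
    rw [← weight_xyWeight]; exact_mod_cast hd
  rcases Nat.lt_or_ge (d 0) 1 with h | h
  · rw [eq_e d, show d 0 = 0 by omega, show d 1 = 0 by omega, show d 2 = 0 by omega]
    simpa [e] using h0
  · rw [eq_e d, show d 0 = 1 by omega, show d 1 = 0 by omega, show d 2 = 0 by omega]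
    simpa [e] using h1

theorem le_weightedOrder_xyWeight {φ : Fin 3 → R3} (h0 : φ 0 = X 0)
    (hc : ∀ i, constantCoeff (φ i) = 0) (hx : ∀ r, r ≠ 0 → coeff (single 0 1) (φ r) = 0)
    (i : Fin 3) : (xyWeight i : ℕ∞) ≤ (φ i).weightedOrder xyWeight := by
  by_cases hi : i = 0
  · subst hi
    rw [h0, X_def, weightedOrder_monomial_of_ne_zero _ one_ne_zero]
    simp [weight_single, xyWeight]
  · have hw : xyWeight i = 2 := by fin_cases i <;> simp_all [xyWeight]
    rw [hw]
    exact two_le_weightedOrder_xyWeight (hc i) (hx i hi)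

theorem pd_eq_pderiv (i : Fin 3) : pd i = pderiv ℂ i := by
  funext f
  ext n
  rw [coeff_pderiv, mul_comm]
  rfl

theorem constantCoeff_pd (i : Fin 3) (f : R3) :
    constantCoeff (pd i f) = coeff (single i 1) f := by
  rw [pd_eq_pderiv, ← coeff_zero_eq_constantCoeff_apply, coeff_pderiv]
  simp

theorem coeff_single_pd_zero (i : Fin 3) (f : R3) :
    coeff (single i 1) (pd 0 f) =
      ((single i 1 : Fin 3 →₀ ℕ) 0 + 1) * coeff (single 0 1 + single i 1) f := by
  rw [add_comm (single 0 1)]; rfl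

theorem pd_VF (i : Fin 3) (Y : Fin 3 → R3) (g : R3) :
    pd i (VF Y g) = VF Y (pd i g) + VF (fun r => pd i (Y r)) g := by
  simp only [VF, pd_eq_pderiv, map_sum, Derivation.leibniz, smul_eq_mul, Finset.sum_add_distrib]
  simp only [mul_comm (pderiv ℂ _ g), pderiv_pderiv_comm i]

theorem VF_X (Y : Fin 3 → R3) (j : Fin 3) : VF Y (X j) = Y j := by
  classical
  simp [VF, pd_eq_pderiv, pderiv_X, Pi.single_apply]

theorem pb_X (φ : Fin 3 → R3) (j : Fin 3) : pb φ (X j) = φ j := by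
  ext k
  refine (tsum_eq_single (single j 1) fun m hm => ?_).trans ?_
  · simp [cf, coeff_X, hm]
  · simp [cf, single_apply]

theorem Conj.pb_eq_VF {φ Y Z : Fin 3 → R3} (h : Conj φ Y Z) (j : Fin 3) :
    pb φ (Z j) = VF Y (φ j) := by
  simpa [VF_X, pb_X] using h (X j)

theorem coeff_pb_eq_sum {w : Fin 3 → ℕ} {φ : Fin 3 → R3}
    (hφ : ∀ i, (w i : ℕ∞) ≤ (φ i).weightedOrder w) (f : R3) {k : Fin 3 →₀ ℕ}
    {s : Finset (Fin 3 →₀ ℕ)} (hs : ∀ m, weight w m ≤ weight w k → m ∈ s) :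
    coeff k (pb φ f) = ∑ m ∈ s, coeff m f * coeff k (∏ i, φ i ^ m i) :=
  tsum_eq_sum fun m hm => mul_eq_zero_of_right _
    (coeff_prod_pow_eq_zero_of_weight_lt hφ (not_le.mp (mt (hs m) hm)))

theorem coeff_single_pb {φ : Fin 3 → R3} (hφ : ∀ i, constantCoeff (φ i) = 0) (f : R3)
    (k : Fin 3) :
    coeff (single k 1) (pb φ f) = ∑ r, coeff (single r 1) f * coeff (single k 1) (φ r) := by
  have hs : ∀ m, weight (fun _ => 1) m ≤ weight (fun _ => 1) (single k 1) →
      m ∈ insert (0 : Fin 3 →₀ ℕ) (Finset.univ.image fun r : Fin 3 => single r 1) := by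
    intro m hm
    rw [← degree_eq_weight_one, degree_single] at hm
    rcases Nat.le_one_iff_eq_zero_or_eq_one.mp hm with h | h
    · simp [(degree_eq_zero_iff m).mp h]
    · obtain ⟨r, rfl⟩ : m ∈ Set.range fun r : Fin 3 => single r 1 := range_single_one ▸ h
      simp
  rw [coeff_pb_eq_sum (fun i => one_le_order_iff_constCoeff_eq_zero.mpr (hφ i)) f hs,
    Finset.sum_insert (by simp),
    Finset.sum_image fun _ _ _ _ h => single_left_injective one_ne_zero h]
  simp [single_apply, coeff_one]

theorem coeff_x_add_single_pb {φ : Fin 3 → R3} (h0 : φ 0 = X 0)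
    (hφ : ∀ i, (xyWeight i : ℕ∞) ≤ (φ i).weightedOrder xyWeight) (f : R3) (k : Fin 3) :
    coeff (single 0 1 + single k 1) (pb φ f) =
      ∑ r, (coeff (single r 1) f * coeff (single 0 1 + single k 1) (φ r) +
        coeff (single 0 1 + single r 1) f * coeff (single k 1) (φ r)) := by
  have hs : ∀ m, weight xyWeight m ≤ weight xyWeight (single (0 : Fin 3) 1 + single k 1) →
      m ∈ ({e 0 0 0, e 3 0 0, e 1 0 0, e 0 1 0, e 0 0 1, e 2 0 0, e 1 1 0, e 1 0 1} : Finset _) := by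
    intro m hm
    have hk : weight xyWeight (single (0 : Fin 3) 1 + single k 1) ≤ 3 := by
      fin_cases k <;> simp [weight_xyWeight]
    rw [weight_xyWeight] at hm
    rw [eq_e m]
    simp only [Finset.mem_insert, Finset.mem_singleton, e_inj]
    omega
  have hx3 : coeff (single 0 1 + single k 1) (X (0 : Fin 3) ^ 3 : R3) = 0 := by
    rw [coeff_X_pow, if_neg]
    intro h
    simpa using congrArg degree h
  rw [coeff_pb_eq_sum hφ f hs, Finset.sum_insert (by simp), Finset.sum_insert (by simp),
    Finset.sum_insert (by simp), Finset.sum_insert (by simp), Finset.sum_insert (by simp),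
    Finset.sum_insert (by simp), Finset.sum_insert (by simp), Finset.sum_singleton]
  simp only [Fin.prod_univ_three, e_apply_zero, e_apply_one, e_apply_two, h0, Fin.sum_univ_three,
    pow_zero, pow_one, one_mul, mul_one, sq, coeff_X_mul_add]
  simp only [e, single_zero, add_zero, zero_add, ← single_add, one_add_one_eq_two]
  rw [hx3, coeff_one, if_neg (by simp)]
  ring

theorem linM_apply (g : Fin 3 → R3) (j i : Fin 3) : linM g j i = coeff (single i 1) (g j) := rfl

theorem linM_add (f g : Fin 3 → R3) : linM (fun j => f j + g j) = linM f + linM g := by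
  ext j i
  simp [linM_apply]

theorem linM_pb {φ : Fin 3 → R3} (hφ : ∀ i, constantCoeff (φ i) = 0) (g : Fin 3 → R3) :
    linM (fun j => pb φ (g j)) = linM g * linM φ := by
  ext j k
  simp [linM_apply, coeff_single_pb hφ, Matrix.mul_apply]

theorem linM_VF {Y : Fin 3 → R3} (hY : ∀ i, constantCoeff (Y i) = 0) (g : Fin 3 → R3) :
    linM (fun j => VF Y (g j)) = linM g * linM Y := by
  ext j k
  simp [linM_apply, VF, coeff_single_mul _ (hY _), constantCoeff_pd, Matrix.mul_apply, mul_comm]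

theorem Conj.linM_mul_eq {φ Y Z : Fin 3 → R3} (h : Conj φ Y Z)
    (hφ : ∀ i, constantCoeff (φ i) = 0) (hY : ∀ i, constantCoeff (Y i) = 0) :
    linM Z * linM φ = linM φ * linM Y := by
  rw [← linM_pb hφ, ← linM_VF hY]
  simp only [h.pb_eq_VF]

def dxLinM (g : Fin 3 → R3) : Matrix (Fin 3) (Fin 3) ℂ := linM fun j => pd 0 (g j)

theorem dxLinM_VF {Y : Fin 3 → R3} (hY : ∀ i, constantCoeff (Y i) = 0)
    (hYx : ∀ i, coeff (single 0 1) (Y i) = 0) (g : Fin 3 → R3) :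
    dxLinM (fun j => VF Y (g j)) = dxLinM g * linM Y + linM g * dxLinM Y := by
  simp only [dxLinM, pd_VF, linM_add]
  rw [linM_VF hY, linM_VF fun i => (constantCoeff_pd 0 (Y i)).trans (hYx i)]

theorem dxLinM_pb {φ : Fin 3 → R3} (h0 : φ 0 = X 0)
    (hφ : ∀ i, (xyWeight i : ℕ∞) ≤ (φ i).weightedOrder xyWeight) (g : Fin 3 → R3) :
    dxLinM (fun j => pb φ (g j)) = linM g * dxLinM φ + dxLinM g * linM φ := by
  have hx : ∀ r, r ≠ 0 → coeff (single 0 1) (φ r) = 0 := fun r hr =>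
    coeff_eq_zero_of_lt_weightedOrder xyWeight <| by
      refine lt_of_lt_of_le ?_ (hφ r)
      fin_cases r
      · exact absurd rfl hr
      all_goals simp [weight_single, xyWeight]
  -- `∂/∂x` doubles the coefficient of `x²` only, and `A(φ)` has no entries linking `x` to `y`.
  have hA : ∀ r i, ((single i 1 : Fin 3 →₀ ℕ) 0 + 1 : ℂ) * coeff (single i 1) (φ r) =
      ((single r 1 : Fin 3 →₀ ℕ) 0 + 1) * coeff (single i 1) (φ r) := by
    intro r i
    fin_cases r <;> fin_cases i <;> simp [h0, coeff_X, hx, single_eq_single_iff]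
  ext j i
  simp only [dxLinM, linM_apply, Matrix.add_apply, Matrix.mul_apply, coeff_single_pd_zero,
    coeff_x_add_single_pb h0 hφ, Finset.mul_sum, ← Finset.sum_add_distrib]
  refine Finset.sum_congr rfl fun r _ => ?_
  linear_combination coeff (single 0 1 + single r 1) (g j) * hA r i

theorem Conj.dxLinM_eq {φ Y Z : Fin 3 → R3} (h : Conj φ Y Z) (h0 : φ 0 = X 0)
    (hφ : ∀ i, (xyWeight i : ℕ∞) ≤ (φ i).weightedOrder xyWeight)
    (hY : ∀ i, constantCoeff (Y i) = 0) (hYx : ∀ i, coeff (single 0 1) (Y i) = 0) :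
    linM Z * dxLinM φ + dxLinM Z * linM φ = dxLinM φ * linM Y + linM φ * dxLinM Y := by
  rw [← dxLinM_pb h0 hφ, ← dxLinM_VF hY hYx]
  simp only [h.pb_eq_VF]

theorem two_le_order_of_mem_sq {F : R3} (hF : F ∈ mI ^ 2) : 2 ≤ F.order := by
  rw [pow_two] at hF
  refine Submodule.mul_induction_on hF (fun a ha b hb => ?_) fun a b ha hb => ?_
  · calc (2 : ℕ∞) = 1 + 1 := by norm_num
      _ ≤ a.order + b.order := add_le_add (one_le_order_iff_constCoeff_eq_zero.mpr ha)
          (one_le_order_iff_constCoeff_eq_zero.mpr hb)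
      _ ≤ (a * b).order := le_order_mul
  · exact le_trans (le_min ha hb) min_order_le_add

theorem coeff_eq_zero_of_mem_sq {F : R3} (hF : F ∈ mI ^ 2) {d : Fin 3 →₀ ℕ}
    (hd : d.degree < 2) : coeff d F = 0 :=
  coeff_of_lt_order (lt_of_lt_of_le (by exact_mod_cast hd) (two_le_order_of_mem_sq hF))

theorem constantCoeff_SN {l : ℂ} {F₁ F₂ : R3} (hF₁ : F₁ ∈ mI ^ 2) (hF₂ : F₂ ∈ mI ^ 2)
    (i : Fin 3) : constantCoeff (SN l F₁ F₂ i) = 0 := by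
  have h₁ := coeff_eq_zero_of_mem_sq hF₁ (d := 0) (by simp)
  have h₂ := coeff_eq_zero_of_mem_sq hF₂ (d := 0) (by simp)
  fin_cases i <;> simp_all [SN, Xv, Cc]

theorem coeff_x_SN {l : ℂ} {F₁ F₂ : R3} (hF₁ : F₁ ∈ mI ^ 2) (hF₂ : F₂ ∈ mI ^ 2) (i : Fin 3) :
    coeff (single 0 1) (SN l F₁ F₂ i) = 0 := by
  have h₁ := coeff_eq_zero_of_mem_sq hF₁ (d := single 0 1) (by simp)
  have h₂ := coeff_eq_zero_of_mem_sq hF₂ (d := single 0 1) (by simp)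
  fin_cases i <;> simp_all [SN, Xv, Cc, coeff_X_pow, coeff_X, single_eq_single_iff]

theorem linM_SN {l : ℂ} {F₁ F₂ : R3} (hF₁ : F₁ ∈ mI ^ 2) (hF₂ : F₂ ∈ mI ^ 2) :
    linM (SN l F₁ F₂) = Matrix.diagonal ![0, -l, l] := by
  ext j k
  have h₁ := coeff_eq_zero_of_mem_sq hF₁ (d := single k 1) (by simp)
  have h₂ := coeff_eq_zero_of_mem_sq hF₂ (d := single k 1) (by simp)
  fin_cases j <;> fin_cases k <;>
    simp_all [linM_apply, SN, Xv, Cc, coeff_X_pow, coeff_X, single_eq_single_iff]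

theorem trace_dxLinM_SN (l : ℂ) (F₁ F₂ : R3) :
    (dxLinM (SN l F₁ F₂)).trace = 2 + resid F₁ F₂ := by
  have hx2 : coeff (single 0 1 + single 0 1) (X (0 : Fin 3) ^ 2 : R3) = 1 := by
    rw [← single_add, coeff_X_pow, if_pos rfl]
  simp [Matrix.trace_fin_three, dxLinM, linM_apply, coeff_single_pd_zero, resid, cf, e, SN, Xv,
    Cc, coeff_X, hx2]
  ring

theorem residue_invariant_under_fibered_conjugacy_general
    (l l' : ℂ) (hl' : l' ≠ 0)
    (F₁ F₂ F₁' F₂' : R3) (hF₁ : F₁ ∈ mI ^ 2) (hF₂ : F₂ ∈ mI ^ 2)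
    (hF₁' : F₁' ∈ mI ^ 2) (hF₂' : F₂' ∈ mI ^ 2)
    (φ : Fin 3 → R3) (hd : IsDiffeo φ) (hf : IsFibered φ)
    (hconj : Conj φ (SN l F₁ F₂) (SN l' F₁' F₂')) :
    resid F₁ F₂ = resid F₁' F₂' := by
  obtain ⟨hφc, hdet⟩ := hd
  have hlin := hconj.linM_mul_eq hφc (constantCoeff_SN hF₁ hF₂)
  have hx : ∀ r, r ≠ 0 → coeff (single 0 1) (φ r) = 0 := by
    intro r hr
    have hr0 := congrFun (congrFun hlin r) 0
    rw [linM_SN hF₁' hF₂', linM_SN hF₁ hF₂] at hr0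
    fin_cases r <;> simp_all [linM_apply]
  have hquad := hconj.dxLinM_eq hf (le_weightedOrder_xyWeight hf hφc hx)
    (constantCoeff_SN hF₁ hF₂) (coeff_x_SN hF₁ hF₂)
  have htr := Matrix.trace_eq_of_mul_add_mul_eq hdet hlin hquad
  rw [trace_dxLinM_SN, trace_dxLinM_SN] at htr
  exact (add_left_cancel htr).symm

/-- **The residue is invariant under fibered conjugacy** of doubly-resonant saddle-nodes
in prepared form. -/
theorem residue_invariant_under_fibered_conjugacy
    (l l' : ℂ) (hl : l ≠ 0) (hl' : l' ≠ 0)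
    (F₁ F₂ F₁' F₂' : R3) (hF₁ : F₁ ∈ mI ^ 2) (hF₂ : F₂ ∈ mI ^ 2)
    (hF₁' : F₁' ∈ mI ^ 2) (hF₂' : F₂' ∈ mI ^ 2)
    (φ : Fin 3 → R3) (hd : IsDiffeo φ) (hf : IsFibered φ)
    (hconj : Conj φ (SN l F₁ F₂) (SN l' F₁' F₂')) :
    resid F₁ F₂ = resid F₁' F₂' :=
  residue_invariant_under_fibered_conjugacy_general l l' hl' F₁ F₂ F₁' F₂' hF₁ hF₂ hF₁' hF₂' φ hd hf
    hconj

end
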